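/- For α ∈ (0,1) and any integer n ≥ 1, the weight a_{0,n+1} = n^{α+1} − (n−α)(n+1)^α is positive. -/
import Mathlib

open Real

theorem stmt15 (α : ℝ) (hα : α ∈ Set.Ioo (0:ℝ) 1) (n : ℕ) (hn : 1 ≤ n) :
    0 < (n:ℝ) ^ (α + 1) - ((n:ℝ) - α) * ((n:ℝ) + 1) ^ α := by
  obtain ⟨hα0, hα1⟩ := hα
  have hn1 : (1:ℝ) ≤ (n:ℝ) := by exact_mod_cast hn
  have hnpos : (0:ℝ) < (n:ℝ) := by linarith
  have hna : 0 < (n:ℝ) - α := by linarith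
  have hs : (-1:ℝ) ≤ 1 / (n:ℝ) := by
    have h : (0:ℝ) ≤ 1 / n := by positivity
    linarith
  have hs' : (1:ℝ) / (n:ℝ) ≠ 0 := by positivity
  have key : ((1:ℝ) + 1 / n) ^ α < 1 + α * (1 / n) :=
    rpow_one_add_lt_one_add_mul_self hs hs' hα0 hα1
  have h1 : ((n:ℝ) + 1) ^ α = (n:ℝ) ^ α * ((1:ℝ) + 1 / n) ^ α := by
    rw [← mul_rpow hnpos.le (by positivity)]
    congr 1
    field_simp
  have hpow : (0:ℝ) < (n:ℝ) ^ α := rpow_pos_of_pos hnpos α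
  have h2 : ((n:ℝ) - α) * ((n:ℝ) + 1) ^ α < ((n:ℝ) - α) * ((n:ℝ) ^ α * (1 + α * (1 / n))) := by
    rw [h1]
    exact mul_lt_mul_of_pos_left (mul_lt_mul_of_pos_left key hpow) hna
  have h3 : ((n:ℝ) - α) * ((n:ℝ) ^ α * (1 + α * (1 / n))) ≤ (n:ℝ) ^ (α + 1) := by
    rw [rpow_add hnpos, rpow_one]
    have : ((n:ℝ) - α) * (1 + α * (1 / n)) ≤ (n:ℝ) := by
      have h4 : ((n:ℝ) - α) * (1 + α * (1 / n)) = n - α^2 / n := by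
        field_simp; ring
      rw [h4]
      have : 0 ≤ α^2 / n := by positivity
      linarith
    calc ((n:ℝ) - α) * ((n:ℝ) ^ α * (1 + α * (1 / n)))
        = (n:ℝ) ^ α * (((n:ℝ) - α) * (1 + α * (1 / n))) := by ring
      _ ≤ (n:ℝ) ^ α * n := by exact mul_le_mul_of_nonneg_left this hpow.le
  linarith
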